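/- arXiv:2205.04200 — 9 statements merged into one kernel-verified Lean document; each statement's English description precedes it below -/
import Mathlib

section
/- If each F_j is convex and x* is a critical point of the multi-objective problem min (F_1,…,F_m), then x* is a weakly efficient solution. -/
open Filter Topology Finset
open scoped RealInnerProductSpace

noncomputable section

/-- One-sided directional derivative: `c = F'(x; d) = lim_{α→0⁺} (F(x+αd) − F(x))/α`. -/
def HasDirDeriv {n : ℕ} (F : EuclideanSpace ℝ (Fin n) → ℝ)
    (x d : EuclideanSpace ℝ (Fin n)) (c : ℝ) : Prop :=
  Filter.Tendsto (fun α : ℝ => (F (x + α • d) - F x) / α) (nhdsWithin 0 (Set.Ioi 0)) (nhds c)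

/-- Subdifferential of a convex function: `∂h(x) = {ξ : h(y) ≥ h(x) + ⟪ξ, y − x⟫ ∀ y}`. -/
def subdiff {n : ℕ} (h : EuclideanSpace ℝ (Fin n) → ℝ) (x : EuclideanSpace ℝ (Fin n)) :
    Set (EuclideanSpace ℝ (Fin n)) :=
  {ξ | ∀ y, h x + ⟪ξ, y - x⟫ ≤ h y}

/-- if each `F_j` is convex and `x*` is a critical point of
`min (F_1,…,F_m)`, then `x*` is a weakly efficient solution. -/
theorem critical_imp_weakly_efficient {n m : ℕ}
    (F : Fin (m + 1) → EuclideanSpace ℝ (Fin n) → ℝ)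
    (hFconv : ∀ j, ConvexOn ℝ Set.univ (F j))
    (hFcont : ∀ j, Continuous (F j))
    (xs : EuclideanSpace ℝ (Fin n))
    (F' : Fin (m + 1) → EuclideanSpace ℝ (Fin n) → ℝ)
    (hF' : ∀ j d, HasDirDeriv (F j) xs d (F' j d))
    (hcrit : ∀ d : EuclideanSpace ℝ (Fin n),
      0 ≤ Finset.univ.sup' Finset.univ_nonempty (fun j => F' j d)) :
    ¬ ∃ x : EuclideanSpace ℝ (Fin n), ∀ j, F j x < F j xs := by
  rintro ⟨x, hx⟩
  set d := x - xs with hd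
  have key : ∀ j, F' j d ≤ F j x - F j xs := by
    intro j
    refine le_of_tendsto (hF' j d) ?_
    have hmem : Set.Ioc (0:ℝ) 1 ∈ nhdsWithin (0:ℝ) (Set.Ioi 0) :=
      Ioc_mem_nhdsGT_of_mem (by simp : (0:ℝ) ∈ Set.Ico (0:ℝ) 1)
    filter_upwards [hmem] with α hα
    obtain ⟨h0, h1⟩ := hα
    have hconv := (hFconv j).2 (Set.mem_univ xs) (Set.mem_univ x)
      (by linarith : (0:ℝ) ≤ 1 - α) h0.le (by ring)
    have heq : (1 - α) • xs + α • x = xs + α • d := by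
      rw [hd]; module
    rw [heq] at hconv
    simp only [smul_eq_mul] at hconv
    rw [div_le_iff₀ h0]
    nlinarith
  have hlt : Finset.univ.sup' Finset.univ_nonempty (fun j => F' j d) < 0 := by
    rw [Finset.sup'_lt_iff]
    intro j _
    have := key j
    have := hx j
    linarith
  have := hcrit d
  linarith
end
end

section
/- Let d(x) be a global minimizer of d ↦ Q(x,d) and set t(x) = Q(x,d(x)). Then there exist λ_1,…,λ_m ≥ 0 with Σ_{j=1}^m λ_j = 1 and vectors ξ_j ∈ ∂g_j(x + d(x)) for j = 1,…,m such that Σ_{j=1}^m λ_j(∇f_j(x) + ∇²f_j(x) d(x) + ξ_j) = 0, λ_j·(Q_j(x,d(x)) − t(x)) = 0 for every j, and Q_j(x,d(x)) ≤ t(x) for every j. -/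
/-!
Each `Q_j(x, ·)` is convex because the Hessian of a convex `C²` function is positive
semidefinite. Separating the open convex set `{u | ∃ d, ∀ j, Q_j(x, d) - t < u j}` from the
origin yields weights `λ` in the standard simplex with `t ≤ ∑ λ_j Q_j(x, d)` for every `d`;
since `Q_j(x, dx) ≤ t`, this gives complementarity and shows that `dx` minimizes
`∑ λ_j Q_j(x, ·)`. Expanding around `dx`, the quadratic terms are of second order and drop out,
leaving `0 ≤ ⟪A, v⟫ + ∑ λ_j (g_j(x + dx + v) - g_j(x + dx))` with
`A = ∑ λ_j (∇f_j(x) + ∇²f_j(x) dx)`. The sum rule for subdifferentials of continuous convex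
functions, obtained by separating an epigraph from a hypograph, then splits `-A` into
functionals `λ_j ⟪ξ_j, ·⟫` with `ξ_j ∈ ∂g_j(x + dx)`.
-/

open Filter Topology Finset
open scoped RealInnerProductSpace

noncomputable section

/-- `Q_j(x,d) = ∇f_j(x)ᵀd + ½ dᵀ∇²f_j(x)d + g_j(x+d) − g_j(x)`, where the Hessian is
the Fréchet derivative of the gradient. -/
def Qj {n m : ℕ} (f g : Fin (m + 1) → EuclideanSpace ℝ (Fin n) → ℝ)
    (j : Fin (m + 1)) (x d : EuclideanSpace ℝ (Fin n)) : ℝ :=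
  ⟪gradient (f j) x, d⟫ + (1 / 2) * ⟪(fderiv ℝ (gradient (f j)) x) d, d⟫
    + g j (x + d) - g j x

/-- `Q(x,d) = max_{1 ≤ j ≤ m} Q_j(x,d)`. -/
def Qmax {n m : ℕ} (f g : Fin (m + 1) → EuclideanSpace ℝ (Fin n) → ℝ)
    (x d : EuclideanSpace ℝ (Fin n)) : ℝ :=
  Finset.univ.sup' Finset.univ_nonempty (fun j => Qj f g j x d)

section ConvexAnalysis

variable {E : Type*} [NormedAddCommGroup E] [NormedSpace ℝ E]

theorem exists_clm_le_of_convexOn_add_nonneg {A B : E → ℝ}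
    (hA : ConvexOn ℝ Set.univ A) (hAc : Continuous A) (hA0 : A 0 = 0)
    (hB : ConvexOn ℝ Set.univ B) (hB0 : B 0 = 0) (hAB : ∀ v, 0 ≤ A v + B v) :
    ∃ ℓ : E →L[ℝ] ℝ, (∀ v, ℓ v ≤ A v) ∧ ∀ v, -ℓ v ≤ B v := by
  have hepi : Convex ℝ {p : E × ℝ | A p.1 < p.2} := by
    simpa using hA.convex_strict_epigraph
  have hhypo : Convex ℝ {p : E × ℝ | p.2 ≤ -B p.1} := by
    simpa using hB.neg.convex_hypograph
  have hdisj : Disjoint {p : E × ℝ | A p.1 < p.2} {p : E × ℝ | p.2 ≤ -B p.1} :=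
    Set.disjoint_left.2 fun p (h₁ : A p.1 < p.2) (h₂ : p.2 ≤ -B p.1) => by linarith [hAB p.1]
  obtain ⟨f, u, hf₁, hf₂⟩ :=
    geometric_hahn_banach_open hepi (isOpen_lt hAc.fst' continuous_snd) hhypo hdisj
  set φ := f.comp (ContinuousLinearMap.inl ℝ E ℝ)
  set β := f (0, 1)
  have hf : ∀ v s, f (v, s) = φ v + s * β := fun v s => by
    rw [← smul_eq_mul, ← map_smul, ContinuousLinearMap.comp_apply, ← map_add]
    simp
  have hu₀ : u ≤ 0 := by simpa [hf, hB0] using hf₂ (0, 0)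
  have hβ : β < 0 := by linarith [show β < u by simpa [hf, hA0] using hf₁ (0, 1)]
  -- the separating hyperplane passes through the origin, which lies on both boundaries
  have hu : 0 ≤ u := by
    by_contra! hu
    have := hf₁ (0, u / β) (by simpa [hA0] using div_pos_of_neg_of_neg hu hβ)
    simp [hf, div_mul_cancel₀ u hβ.ne] at this
  refine ⟨(-β)⁻¹ • φ, fun v => ?_, fun v => ?_⟩
  · refine le_of_forall_pos_lt_add fun ε hε => ?_
    have := hf₁ (v, A v + ε) (by simpa using hε)
    rw [hf] at this
    simp only [smul_apply, smul_eq_mul]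
    rw [inv_mul_eq_div, div_lt_iff₀ (by linarith)]
    linarith
  · have := hf₂ (v, -B v) (by simp)
    rw [hf] at this
    simp only [smul_apply, smul_eq_mul]
    rw [inv_mul_eq_div, ← neg_div, div_le_iff₀ (by linarith)]
    linarith

theorem convexOn_finset_sum {ι : Type*} {F : ι → E → ℝ} (hF : ∀ j, ConvexOn ℝ Set.univ (F j))
    (s : Finset ι) : ConvexOn ℝ Set.univ fun v => ∑ j ∈ s, F j v := by
  simpa only [Finset.sum_fn] using
    Finset.sum_induction F (ConvexOn ℝ Set.univ) (s := s) (fun _ _ => ConvexOn.add)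
      (convexOn_const 0 convex_univ) fun j _ => hF j

theorem ConvexOn.comp_add_sub {g : E → ℝ} (hg : ConvexOn ℝ Set.univ g) (y : E) :
    ConvexOn ℝ Set.univ fun v => g (y + v) - g y := by
  have := (hg.translate_right y).add_const (-g y)
  rwa [Set.preimage_univ] at this

theorem exists_clm_add_sum_eq_zero {ι : Type*} [DecidableEq ι] {F : ι → E → ℝ}
    (hconv : ∀ j, ConvexOn ℝ Set.univ (F j)) (hcont : ∀ j, Continuous (F j))
    (h0 : ∀ j, F j 0 = 0) (s : Finset ι) (L : E →L[ℝ] ℝ)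
    (hL : ∀ v, 0 ≤ L v + ∑ j ∈ s, F j v) :
    ∃ ℓ : ι → E →L[ℝ] ℝ, (∀ j ∈ s, ∀ v, ℓ j v ≤ F j v) ∧ ∀ v, L v + ∑ j ∈ s, ℓ j v = 0 := by
  induction s using Finset.induction_on generalizing L with
  | empty =>
    refine ⟨0, by simp, fun v => ?_⟩
    simp only [Finset.sum_empty, add_zero] at hL ⊢
    linarith [hL v, map_neg L v ▸ hL (-v)]
  | @insert a s ha ih =>
    obtain ⟨ℓa, hℓa, hℓa'⟩ := exists_clm_le_of_convexOn_add_nonneg (hconv a) (hcont a) (h0 a)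
      (B := fun v => L v + ∑ j ∈ s, F j v)
      ((L.toLinearMap.convexOn convex_univ).add (convexOn_finset_sum hconv s)) (by simp [h0])
      fun v => by simpa [Finset.sum_insert ha, add_left_comm] using hL v
    obtain ⟨ℓ, hℓ, hℓsum⟩ := ih (L + ℓa) fun v => by
      simp only [add_apply]; linarith [hℓa' v]
    have hℓs : ∀ j ∈ s, Function.update ℓ a ℓa j = ℓ j := fun j hj =>
      Function.update_of_ne (ne_of_mem_of_not_mem hj ha) _ _
    refine ⟨Function.update ℓ a ℓa, fun j hj v => ?_, fun v => ?_⟩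
    · rcases Finset.mem_insert.1 hj with rfl | hj
      · simpa using hℓa v
      · simpa [hℓs j hj] using hℓ j hj v
    · rw [Finset.sum_insert ha, Finset.sum_congr rfl fun j hj => by rw [hℓs j hj],
        Function.update_self]
      linarith [hℓsum v, add_apply L ℓa v]

theorem ConvexOn.exists_clm_le_sub {g : E → ℝ} (hg : ConvexOn ℝ Set.univ g)
    (hgc : Continuous g) (y : E) : ∃ ℓ : E →L[ℝ] ℝ, ∀ v, ℓ v ≤ g (y + v) - g y := by
  obtain ⟨ℓ, hℓ, -⟩ := exists_clm_le_of_convexOn_add_nonneg (hg.comp_add_sub y) (by fun_prop)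
    (by simp) (by simpa [Function.comp_def, ← sub_eq_add_neg] using
      (hg.comp_add_sub y).comp_linearMap (-LinearMap.id)) (by simp) fun v => by
      have hmid := hg.2 (Set.mem_univ (y + v)) (Set.mem_univ (y - v))
        (by norm_num : (0 : ℝ) ≤ 1 / 2) (by norm_num : (0 : ℝ) ≤ 1 / 2) (by norm_num)
      rw [show (1 / 2 : ℝ) • (y + v) + (1 / 2 : ℝ) • (y - v) = y by module, smul_eq_mul,
        smul_eq_mul] at hmid
      linarith
  exact ⟨ℓ, hℓ⟩

end ConvexAnalysis

section Multipliers

variable {E : Type*} [AddCommGroup E] [Module ℝ E]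

theorem ConvexOn.nonneg_of_nonneg_add_quadratic {ψ q : E → ℝ} (hψ : ConvexOn ℝ Set.univ ψ)
    (hψ0 : ψ 0 = 0) (hq : ∀ (τ : ℝ) v, q (τ • v) = τ ^ 2 * q v) (h : ∀ v, 0 ≤ ψ v + q v)
    (v : E) : 0 ≤ ψ v := by
  have hτ : ∀ τ ∈ Set.Ioc (0 : ℝ) 1, -(τ * q v) ≤ ψ v := by
    rintro τ ⟨hτ0, hτ1⟩
    have hseg := hψ.2 (Set.mem_univ v) (Set.mem_univ 0) hτ0.le (sub_nonneg.2 hτ1)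
      (add_sub_cancel τ 1)
    simp only [smul_zero, add_zero, hψ0, smul_eq_mul, mul_zero] at hseg
    have hquad := hq τ v ▸ h (τ • v)
    nlinarith
  have hlim : Tendsto (fun τ : ℝ => -(τ * q v)) (𝓝[>] 0) (𝓝 0) :=
    ((by fun_prop : Continuous fun τ : ℝ => -(τ * q v)).tendsto' 0 0 (by simp)).mono_left
      nhdsWithin_le_nhds
  exact le_of_tendsto hlim (Filter.eventually_of_mem (Ioc_mem_nhdsGT one_pos) hτ)

variable {ι : Type*} [Fintype ι]

theorem exists_mem_stdSimplex_forall_sum_mul_pos {C : Set (ι → ℝ)} (hCo : IsOpen C)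
    (hCc : Convex ℝ C) (hCup : IsUpperSet C) (hCne : C.Nonempty) (hC0 : (0 : ι → ℝ) ∉ C) :
    ∃ w ∈ stdSimplex ℝ ι, ∀ u ∈ C, 0 < ∑ j, w j * u j := by
  classical
  obtain ⟨f, hf⟩ := geometric_hahn_banach_open_point hCc hCo hC0
  rw [map_zero] at hf
  obtain ⟨u₀, hu₀⟩ := hCne
  set ν : ι → ℝ := fun j => -f (Pi.single j 1)
  have hfν : ∀ u, f u = -∑ j, ν j * u j := fun u => by
    conv_lhs => rw [← Finset.univ_sum_single u]
    simp only [map_sum, ν, neg_mul, Finset.sum_neg_distrib, neg_neg]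
    refine Finset.sum_congr rfl fun j _ => ?_
    rw [mul_comm, ← smul_eq_mul, ← map_smul, ← Pi.single_smul, smul_eq_mul, mul_one]
  have hν : ∀ j, 0 ≤ ν j := fun j => by
    by_contra! hj
    replace hj : 0 < f (Pi.single j 1) := by simpa [ν] using hj
    have hs : 0 ≤ -f u₀ / f (Pi.single j 1) := div_nonneg (by linarith [hf _ hu₀]) hj.le
    have hle : u₀ ≤ u₀ + (-f u₀ / f (Pi.single j 1)) • Pi.single j 1 :=
      le_add_of_nonneg_right (smul_nonneg hs (Pi.single_nonneg.2 zero_le_one))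
    have := hf _ (hCup hle hu₀)
    rw [map_add, map_smul, smul_eq_mul, div_mul_cancel₀ _ hj.ne'] at this
    simp at this
  set S := ∑ j, ν j
  have hS : 0 < S := by
    by_contra! hS
    have hzero := (Finset.sum_eq_zero_iff_of_nonneg fun j _ => hν j).1
      (le_antisymm hS (Finset.sum_nonneg fun j _ => hν j))
    have := hf _ hu₀
    simp [hfν, hzero] at this
  refine ⟨fun j => ν j / S, ⟨fun j => div_nonneg (hν j) hS.le, ?_⟩, fun u hu => ?_⟩
  · rw [← Finset.sum_div, div_self hS.ne']
  have := hf u hu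
  simp only [div_mul_eq_mul_div, ← Finset.sum_div]
  rw [hfν, neg_lt_zero] at this
  positivity

theorem exists_mem_stdSimplex_forall_le_sum_mul {φ : ι → E → ℝ} {t : ℝ}
    (hφ : ∀ j, ConvexOn ℝ Set.univ (φ j)) (h : ∀ d, ∃ j, t ≤ φ j d) :
    ∃ w ∈ stdSimplex ℝ ι, ∀ d, t ≤ ∑ j, w j * φ j d := by
  set C : Set (ι → ℝ) := ⋃ d, Set.univ.pi fun j => Set.Ioi (φ j d - t)
  have hmemC : ∀ u, u ∈ C ↔ ∃ d, ∀ j, φ j d - t < u j := by simp [C]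
  have hCo : IsOpen C :=
    isOpen_iUnion fun d => isOpen_set_pi Set.finite_univ fun j _ => isOpen_Ioi
  have hCc : Convex ℝ C := by
    refine convex_iff_forall_pos.2 fun u hu u' hu' a b ha hb hab => ?_
    obtain ⟨d, hd⟩ := (hmemC u).1 hu
    obtain ⟨d', hd'⟩ := (hmemC u').1 hu'
    refine (hmemC _).2 ⟨a • d + b • d', fun j => ?_⟩
    calc φ j (a • d + b • d') - t ≤ a * (φ j d - t) + b * (φ j d' - t) := by
          have hconv := (hφ j).2 (Set.mem_univ d) (Set.mem_univ d') ha.le hb.le hab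
          rw [smul_eq_mul, smul_eq_mul] at hconv
          linear_combination hconv + t * hab
      _ < a * u j + b * u' j :=
          add_lt_add (mul_lt_mul_of_pos_left (hd j) ha) (mul_lt_mul_of_pos_left (hd' j) hb)
  have hCup : IsUpperSet C := fun u v huv hu => by
    obtain ⟨d, hd⟩ := (hmemC u).1 hu
    exact (hmemC v).2 ⟨d, fun j => (hd j).trans_le (huv j)⟩
  have hC0 : (0 : ι → ℝ) ∉ C := fun h0 => by
    obtain ⟨d, hd⟩ := (hmemC 0).1 h0
    obtain ⟨j, hj⟩ := h d
    exact (hd j).not_ge (sub_nonneg.2 hj)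
  obtain ⟨w, hw, hwC⟩ := exists_mem_stdSimplex_forall_sum_mul_pos hCo hCc hCup
    ⟨_, (hmemC _).2 ⟨0, fun j => lt_add_one (φ j 0 - t)⟩⟩ hC0
  refine ⟨w, hw, fun d => le_of_forall_pos_lt_add fun ε hε => ?_⟩
  have := hwC _ ((hmemC _).2 ⟨d, fun j => lt_add_of_pos_right (φ j d - t) hε⟩)
  simp only [mul_add, mul_sub, Finset.sum_add_distrib, Finset.sum_sub_distrib, ← Finset.sum_mul,
    hw.2, one_mul] at this
  linarith

theorem mul_sub_eq_zero_of_le_sum_mul {w a : ι → ℝ} {t : ℝ} (hw : w ∈ stdSimplex ℝ ι)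
    (ha : ∀ j, a j ≤ t) (ht : t ≤ ∑ j, w j * a j) (j : ι) : w j * (a j - t) = 0 := by
  have hnonneg : ∀ k ∈ Finset.univ, 0 ≤ w k * (t - a k) :=
    fun k _ => mul_nonneg (hw.1 k) (sub_nonneg.2 (ha k))
  have hsum : ∑ k, w k * (t - a k) = 0 := by
    refine le_antisymm ?_ (Finset.sum_nonneg hnonneg)
    simp only [mul_sub, Finset.sum_sub_distrib, ← Finset.sum_mul, hw.2, one_mul]
    linarith
  linarith [(Finset.sum_eq_zero_iff_of_nonneg hnonneg).1 hsum j (Finset.mem_univ j)]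

end Multipliers

section Hessian

variable {E : Type*} [NormedAddCommGroup E] [InnerProductSpace ℝ E]

theorem convexOn_inner_apply_self {H : E →L[ℝ] E} (hH : ∀ v, 0 ≤ ⟪H v, v⟫) :
    ConvexOn ℝ Set.univ fun v => ⟪H v, v⟫ := by
  refine ⟨convex_univ, fun u _ w _ a b ha hb hab => ?_⟩
  have key := hH (u - w)
  obtain rfl : b = 1 - a := by linarith
  simp only [map_add, map_sub, map_smul, inner_add_left, inner_add_right, inner_sub_left,
    inner_sub_right, real_inner_smul_left, real_inner_smul_right, smul_eq_mul] at key ⊢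
  nlinarith [mul_nonneg (mul_nonneg ha hb) key]

variable [CompleteSpace E] {f : E → ℝ}

theorem inner_fderiv_gradient (f : E → ℝ) (x u w : E) :
    ⟪fderiv ℝ (gradient f) x u, w⟫ = fderiv ℝ (fderiv ℝ f) x u w := by
  have : gradient f = (InnerProductSpace.toDual ℝ E).symm ∘ fderiv ℝ f := rfl
  rw [this, LinearIsometryEquiv.comp_fderiv]
  exact InnerProductSpace.toDual_symm_apply

theorem ContDiff.inner_fderiv_gradient_comm (hf : ContDiff ℝ 2 f) (x u w : E) :
    ⟪fderiv ℝ (gradient f) x u, w⟫ = ⟪fderiv ℝ (gradient f) x w, u⟫ := by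
  rw [inner_fderiv_gradient, inner_fderiv_gradient]
  exact hf.contDiffAt.isSymmSndFDerivAt (by simp) u w

theorem ConvexOn.inner_fderiv_gradient_self_nonneg (hconv : ConvexOn ℝ Set.univ f)
    (hf : ContDiff ℝ 2 f) (x v : E) : 0 ≤ ⟪fderiv ℝ (gradient f) x v, v⟫ := by
  set G : ℝ → ℝ := fun s => fderiv ℝ f (x + s • v) v
  have hline : ∀ s : ℝ, HasDerivAt (fun r : ℝ => x + r • v) v s := fun s => by
    simpa using ((hasDerivAt_id s).smul_const v).const_add x
  have hderiv : ∀ s, HasDerivAt (fun s : ℝ => f (x + s • v)) (G s) s := fun s =>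
    (hf.differentiable two_ne_zero _).hasFDerivAt.comp_hasDerivAt s (hline s)
  have hmono : Monotone G := by
    have hconv' : ConvexOn ℝ Set.univ fun s : ℝ => f (x + s • v) := by
      simpa [Function.comp_def, AffineMap.lineMap_apply, add_comm] using
        hconv.comp_affineMap (AffineMap.lineMap x (x + v))
    intro s s' hss'
    simpa only [(hderiv _).deriv] using
      hconv'.monotoneOn_deriv (fun r _ => (hderiv r).differentiableAt) (Set.mem_univ s)
        (Set.mem_univ s') hss'
  have hG : HasDerivAt G (fderiv ℝ (fderiv ℝ f) x v v) 0 := by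
    have hf' : HasFDerivAt (fderiv ℝ f) (fderiv ℝ (fderiv ℝ f) x) (x + (0 : ℝ) • v) := by
      simpa using ((hf.fderiv_right (m := 1) (by norm_num)).differentiable one_ne_zero
        x).hasFDerivAt
    exact (ContinuousLinearMap.apply ℝ ℝ v).hasFDerivAt.comp_hasDerivAt 0
      (hf'.comp_hasDerivAt 0 (hline 0))
  rw [inner_fderiv_gradient, ← hG.deriv]
  exact hmono.deriv_nonneg

end Hessian

section KKT

variable {n m : ℕ} {f g : Fin (m + 1) → EuclideanSpace ℝ (Fin n) → ℝ}

theorem mem_subdiff_of_clm_le {h : EuclideanSpace ℝ (Fin n) → ℝ} {y : EuclideanSpace ℝ (Fin n)}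
    {ℓ : EuclideanSpace ℝ (Fin n) →L[ℝ] ℝ} (hℓ : ∀ v, ℓ v ≤ h (y + v) - h y) :
    (InnerProductSpace.toDual ℝ _).symm ℓ ∈ subdiff h y := fun z => by
  have := hℓ (z - y)
  rw [add_sub_cancel] at this
  rw [InnerProductSpace.toDual_symm_apply]
  linarith

theorem exists_mem_subdiff_mul_inner_eq {h : EuclideanSpace ℝ (Fin n) → ℝ}
    (hconv : ConvexOn ℝ Set.univ h) (hcont : Continuous h) {c : ℝ} (hc : 0 ≤ c)
    {y : EuclideanSpace ℝ (Fin n)} {ℓ : EuclideanSpace ℝ (Fin n) →L[ℝ] ℝ}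
    (hℓ : ∀ v, ℓ v ≤ c * (h (y + v) - h y)) : ∃ ξ ∈ subdiff h y, ∀ v, c * ⟪ξ, v⟫ = ℓ v := by
  rcases hc.eq_or_lt with rfl | hc
  · obtain ⟨ℓ', hℓ'⟩ := hconv.exists_clm_le_sub hcont y
    refine ⟨_, mem_subdiff_of_clm_le hℓ', fun v => ?_⟩
    simp only [zero_mul] at hℓ ⊢
    linarith [hℓ v, map_neg ℓ v ▸ hℓ (-v)]
  · refine ⟨_, mem_subdiff_of_clm_le (ℓ := c⁻¹ • ℓ) fun v => ?_, fun v => ?_⟩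
    · rw [smul_apply, smul_eq_mul, inv_mul_le_iff₀ hc]
      exact hℓ v
    · rw [InnerProductSpace.toDual_symm_apply, smul_apply, smul_eq_mul,
        mul_inv_cancel_left₀ hc.ne']

variable {j : Fin (m + 1)}

theorem convexOn_Qj (hfconv : ConvexOn ℝ Set.univ (f j)) (hfC2 : ContDiff ℝ 2 (f j))
    (hgconv : ConvexOn ℝ Set.univ (g j)) (x : EuclideanSpace ℝ (Fin n)) :
    ConvexOn ℝ Set.univ (Qj f g j x) := by
  refine ((((innerSL ℝ (gradient (f j) x)).toLinearMap.convexOn convex_univ).add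
    ((convexOn_inner_apply_self (hfconv.inner_fderiv_gradient_self_nonneg hfC2 x)).smul
      (by norm_num : (0 : ℝ) ≤ 1 / 2))).add (hgconv.comp_add_sub x)).congr fun d _ => ?_
  simp [Qj, add_sub_assoc]

theorem Qj_add (hfC2 : ContDiff ℝ 2 (f j)) (x d v : EuclideanSpace ℝ (Fin n)) :
    Qj f g j x (d + v) = Qj f g j x d
      + ⟪gradient (f j) x + fderiv ℝ (gradient (f j)) x d, v⟫
      + 1 / 2 * ⟪fderiv ℝ (gradient (f j)) x v, v⟫ + (g j (x + d + v) - g j (x + d)) := by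
  simp only [Qj, map_add, inner_add_left, inner_add_right, add_assoc]
  rw [hfC2.inner_fderiv_gradient_comm x v d]
  ring

theorem exists_mem_subdiff_sum_smul_eq_zero_of_minimizer (hfC2 : ∀ j, ContDiff ℝ 2 (f j))
    (hgconv : ∀ j, ConvexOn ℝ Set.univ (g j)) (hgcont : ∀ j, Continuous (g j))
    {w : Fin (m + 1) → ℝ} (hw : ∀ j, 0 ≤ w j) {x dx : EuclideanSpace ℝ (Fin n)}
    (hmin : ∀ d, ∑ j, w j * Qj f g j x dx ≤ ∑ j, w j * Qj f g j x d) :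
    ∃ ξ : Fin (m + 1) → EuclideanSpace ℝ (Fin n), (∀ j, ξ j ∈ subdiff (g j) (x + dx)) ∧
      ∑ j, w j • (gradient (f j) x + fderiv ℝ (gradient (f j)) x dx + ξ j) = 0 := by
  set H := fun j => fderiv ℝ (gradient (f j)) x
  set A := ∑ j, w j • (gradient (f j) x + H j dx)
  set G : Fin (m + 1) → EuclideanSpace ℝ (Fin n) → ℝ :=
    fun j v => w j * (g j (x + dx + v) - g j (x + dx))
  have hGconv : ∀ j, ConvexOn ℝ Set.univ (G j) :=
    fun j => ((hgconv j).comp_add_sub (x + dx)).smul (hw j)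
  have hGcont : ∀ j, Continuous (G j) := fun j => by
    have := hgcont j
    fun_prop
  -- the quadratic terms of `Q_j(x, dx + v)` are negligible at first order in `v`
  have hopt : ∀ v, 0 ≤ innerSL ℝ A v + ∑ j, G j v := by
    refine ConvexOn.nonneg_of_nonneg_add_quadratic
      ((((innerSL ℝ A).toLinearMap.convexOn convex_univ).add
        (convexOn_finset_sum hGconv Finset.univ)))
      (by simp [G]) (q := fun v => ∑ j, w j * (1 / 2 * ⟪H j v, v⟫)) (fun τ v => ?_) fun v => ?_
    · simp only [map_smul, real_inner_smul_left, real_inner_smul_right, Finset.mul_sum]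
      exact Finset.sum_congr rfl fun j _ => by ring
    · have := hmin (dx + v)
      simp only [Qj_add (hfC2 _), mul_add, Finset.sum_add_distrib] at this
      simp only [innerSL_apply_apply, A, sum_inner, real_inner_smul_left, G]
      linarith
  obtain ⟨ℓ, hℓ, hℓsum⟩ := exists_clm_add_sum_eq_zero hGconv hGcont (fun j => by simp [G])
    Finset.univ (innerSL ℝ A) hopt
  choose ξ hξ hξℓ using fun j =>
    exists_mem_subdiff_mul_inner_eq (hgconv j) (hgcont j) (hw j) (hℓ j (Finset.mem_univ j))
  refine ⟨ξ, hξ, ext_inner_right ℝ fun v => ?_⟩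
  have := hℓsum v
  simp only [innerSL_apply_apply, A, sum_inner, real_inner_smul_left, inner_add_left, mul_add,
    Finset.sum_add_distrib] at this
  simpa only [sum_inner, real_inner_smul_left, inner_add_left, mul_add, Finset.sum_add_distrib,
    hξℓ, inner_zero_left] using this

end KKT

/-- KKT conditions at a global minimizer `d(x)` of `d ↦ Q(x,d)`, with
`t(x) = Q(x,d(x))`: there exist multipliers `λ_j ≥ 0` summing to one and subgradients
`ξ_j ∈ ∂g_j(x + d(x))` with `Σ λ_j (∇f_j(x) + ∇²f_j(x)d(x) + ξ_j) = 0`, complementarity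
`λ_j (Q_j(x,d(x)) − t(x)) = 0`, and `Q_j(x,d(x)) ≤ t(x)` for every `j`. -/
theorem kkt_conditions_of_minimizer {n m : ℕ}
    (f g : Fin (m + 1) → EuclideanSpace ℝ (Fin n) → ℝ)
    (hfconv : ∀ j, ConvexOn ℝ Set.univ (f j))
    (hfC2 : ∀ j, ContDiff ℝ 2 (f j))
    (hgconv : ∀ j, ConvexOn ℝ Set.univ (g j))
    (hgcont : ∀ j, Continuous (g j))
    (x dx : EuclideanSpace ℝ (Fin n)) (t : ℝ)
    (hmin : ∀ d, Qmax f g x dx ≤ Qmax f g x d)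
    (ht : t = Qmax f g x dx) :
    ∃ (lam : Fin (m + 1) → ℝ) (ξ : Fin (m + 1) → EuclideanSpace ℝ (Fin n)),
      (∀ j, 0 ≤ lam j) ∧ (∑ j, lam j = 1) ∧
      (∀ j, ξ j ∈ subdiff (g j) (x + dx)) ∧
      (∑ j, lam j • (gradient (f j) x + (fderiv ℝ (gradient (f j)) x) dx + ξ j) = 0) ∧
      (∀ j, lam j * (Qj f g j x dx - t) = 0) ∧
      (∀ j, Qj f g j x dx ≤ t) := by
  have hle : ∀ j, Qj f g j x dx ≤ t := fun j =>
    ht ▸ Finset.le_sup' (fun j => Qj f g j x dx) (Finset.mem_univ j)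
  have hmax : ∀ d, ∃ j, t ≤ Qj f g j x d := fun d => by
    obtain ⟨j, -, hj⟩ := Finset.exists_mem_eq_sup' Finset.univ_nonempty (Qj f g · x d)
    exact ⟨j, ht ▸ hj ▸ hmin d⟩
  obtain ⟨lam, hlam, hlamt⟩ := exists_mem_stdSimplex_forall_le_sum_mul
    (fun j => convexOn_Qj (hfconv j) (hfC2 j) (hgconv j) x) hmax
  have hdx : ∑ j, lam j * Qj f g j x dx ≤ t :=
    calc ∑ j, lam j * Qj f g j x dx ≤ ∑ j, lam j * t :=
          Finset.sum_le_sum fun j _ => mul_le_mul_of_nonneg_left (hle j) (hlam.1 j)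
      _ = t := by rw [← Finset.sum_mul, hlam.2, one_mul]
  obtain ⟨ξ, hξ, hstat⟩ := exists_mem_subdiff_sum_smul_eq_zero_of_minimizer hfC2 hgconv hgcont
    hlam.1 fun d => hdx.trans (hlamt d)
  exact ⟨lam, ξ, hlam.1, hlam.2, hξ, hstat, mul_sub_eq_zero_of_le_sum_mul hlam hle (hlamt dx), hle⟩
end
end

section
/- Suppose each f_j is strictly convex and let d(x) be the unique global minimizer of d ↦ Q(x,d). If d(x) ≠ 0, then for every j = 1,…,m one has ∇f_j(x)ᵀd(x) + g_j(x + d(x)) − g_j(x) ≤ −½ d(x)ᵀ∇²f_j(x) d(x) < 0. -/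
open Filter Topology Finset
open scoped RealInnerProductSpace

noncomputable section

/-- if each `f_j` is strictly convex (with positive definite Hessian) and
`d(x) ≠ 0` is the unique global minimizer of `d ↦ Q(x,d)`, then for every `j`,
`∇f_j(x)ᵀd(x) + g_j(x + d(x)) − g_j(x) ≤ −½ d(x)ᵀ∇²f_j(x)d(x) < 0`. -/
theorem descent_inequality_of_nonzero_minimizer {n m : ℕ}
    (f g : Fin (m + 1) → EuclideanSpace ℝ (Fin n) → ℝ)
    (hfstrict : ∀ j, StrictConvexOn ℝ Set.univ (f j))
    (hfC2 : ∀ j, ContDiff ℝ 2 (f j))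
    (hfposdef : ∀ j (y d : EuclideanSpace ℝ (Fin n)), d ≠ 0 →
      0 < ⟪(fderiv ℝ (gradient (f j)) y) d, d⟫)
    (hgconv : ∀ j, ConvexOn ℝ Set.univ (g j))
    (hgcont : ∀ j, Continuous (g j))
    (x dx : EuclideanSpace ℝ (Fin n))
    (hmin : ∀ d, Qmax f g x dx ≤ Qmax f g x d)
    (huniq : ∀ d, (∀ d', Qmax f g x d ≤ Qmax f g x d') → d = dx)
    (hne : dx ≠ 0) :
    ∀ j, ⟪gradient (f j) x, dx⟫ + g j (x + dx) - g j x
          ≤ -(1 / 2) * ⟪(fderiv ℝ (gradient (f j)) x) dx, dx⟫ ∧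
        -(1 / 2) * ⟪(fderiv ℝ (gradient (f j)) x) dx, dx⟫ < 0 := by
  intro j
  have hpos := hfposdef j x dx hne
  have h0 : Qmax f g x 0 = 0 := by
    unfold Qmax
    have : ∀ j : Fin (m + 1), Qj f g j x 0 = 0 := by
      intro j
      simp [Qj, inner_zero_right]
    simp only [this]
    exact Finset.sup'_const _ 0
  have hle : Qmax f g x dx ≤ 0 := h0 ▸ hmin 0
  have hj : Qj f g j x dx ≤ Qmax f g x dx :=
    Finset.le_sup' (fun j => Qj f g j x dx) (Finset.mem_univ j)
  have : Qj f g j x dx ≤ 0 := le_trans hj hle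
  unfold Qj at this
  constructor
  · linarith
  · linarith
end
end

section
/- Let f_j : ℝⁿ → ℝ be continuously differentiable and g_j : ℝⁿ → ℝ be convex and continuous, and set F_j = f_j + g_j. If d ∈ ℝⁿ satisfies ∇f_j(x)ᵀd + g_j(x+d) − g_j(x) < 0 for every j = 1,…,m, then the directional derivatives satisfy F_j'(x; d) < 0 for every j = 1,…,m. -/
/-!
The difference quotient of `F_j` at `x` in direction `d` splits into that of `f_j`, which tends
to `⟪∇f_j(x), d⟫`, and that of `g_j`, which by convexity is at most `g_j(x + d) − g_j(x)` for
`0 < α ≤ 1`. Hence `F_j'(x; d) ≤ ⟪∇f_j(x), d⟫ + g_j(x + d) − g_j(x) < 0`.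
-/

open Filter Topology Finset
open scoped RealInnerProductSpace

noncomputable section

variable {E : Type*} [NormedAddCommGroup E] [NormedSpace ℝ E]

theorem ConvexOn.sub_div_le_sub_of_le_one {g : E → ℝ} (hg : ConvexOn ℝ Set.univ g) (x d : E)
    {α : ℝ} (hα₀ : 0 < α) (hα₁ : α ≤ 1) :
    (g (x + α • d) - g x) / α ≤ g (x + d) - g x := by
  have hconv := hg.2 (Set.mem_univ (x + d)) (Set.mem_univ x) hα₀.le (sub_nonneg.2 hα₁)
    (add_sub_cancel α 1)
  have hpoint : α • (x + d) + (1 - α) • x = x + α • d := by module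
  rw [hpoint, smul_eq_mul, smul_eq_mul] at hconv
  rw [div_le_iff₀ hα₀]
  linarith

theorem ConvexOn.le_sub_of_tendsto_sub_div {g : E → ℝ} (hg : ConvexOn ℝ Set.univ g) {x d : E}
    {c : ℝ} (hc : Tendsto (fun α : ℝ => (g (x + α • d) - g x) / α) (𝓝[>] 0) (𝓝 c)) :
    c ≤ g (x + d) - g x := by
  refine le_of_tendsto hc ?_
  filter_upwards [Ioc_mem_nhdsGT zero_lt_one] with α hα
  exact hg.sub_div_le_sub_of_le_one x d hα.1 hα.2

theorem HasFDerivAt.tendsto_sub_div {f : E → ℝ} {f' : E →L[ℝ] ℝ} {x : E}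
    (hf : HasFDerivAt f f' x) (d : E) :
    Tendsto (fun α : ℝ => (f (x + α • d) - f x) / α) (𝓝[>] 0) (𝓝 (f' d)) := by
  simpa only [smul_eq_mul, inv_mul_eq_div] using (hf.hasLineDerivAt d).tendsto_slope_zero_right

theorem HasDirDeriv.le_inner_gradient_add_sub {n : ℕ} {f g : EuclideanSpace ℝ (Fin n) → ℝ}
    {x d : EuclideanSpace ℝ (Fin n)} {c : ℝ} (hf : DifferentiableAt ℝ f x)
    (hg : ConvexOn ℝ Set.univ g) (hc : HasDirDeriv (fun y => f y + g y) x d c) :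
    c ≤ ⟪gradient f x, d⟫ + g (x + d) - g x := by
  have hfquot := hf.hasGradientAt.hasFDerivAt.tendsto_sub_div d
  rw [InnerProductSpace.toDual_apply_apply] at hfquot
  have hgquot : Tendsto (fun α : ℝ => (g (x + α • d) - g x) / α) (𝓝[>] 0)
      (𝓝 (c - ⟪gradient f x, d⟫)) :=
    (hc.sub hfquot).congr fun α => by ring
  linarith [hg.le_sub_of_tendsto_sub_div hgquot]

theorem directional_derivative_negative_general {n m : ℕ}
    (f g : Fin (m + 1) → EuclideanSpace ℝ (Fin n) → ℝ)
    (hfC1 : ∀ j, ContDiff ℝ 1 (f j))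
    (hgconv : ∀ j, ConvexOn ℝ Set.univ (g j))
    (x d : EuclideanSpace ℝ (Fin n))
    (F' : Fin (m + 1) → ℝ)
    (hF' : ∀ j, HasDirDeriv (fun y => f j y + g j y) x d (F' j))
    (hneg : ∀ j, ⟪gradient (f j) x, d⟫ + g j (x + d) - g j x < 0) :
    ∀ j, F' j < 0 := by
  intro j
  have hf : DifferentiableAt ℝ (f j) x := ((hfC1 j).differentiable one_ne_zero).differentiableAt
  exact (HasDirDeriv.le_inner_gradient_add_sub hf (hgconv j) (hF' j)).trans_lt (hneg j)

/-- if `∇f_j(x)ᵀd + g_j(x+d) − g_j(x) < 0` for every `j`, then the one-sided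
directional derivatives of `F_j = f_j + g_j` satisfy `F_j'(x; d) < 0` for every `j`. -/
theorem directional_derivative_negative {n m : ℕ}
    (f g : Fin (m + 1) → EuclideanSpace ℝ (Fin n) → ℝ)
    (hfC1 : ∀ j, ContDiff ℝ 1 (f j))
    (hgconv : ∀ j, ConvexOn ℝ Set.univ (g j))
    (hgcont : ∀ j, Continuous (g j))
    (x d : EuclideanSpace ℝ (Fin n))
    (F' : Fin (m + 1) → ℝ)
    (hF' : ∀ j, HasDirDeriv (fun y => f j y + g j y) x d (F' j))
    (hneg : ∀ j, ⟪gradient (f j) x, d⟫ + g j (x + d) - g j x < 0) :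
    ∀ j, F' j < 0 :=
  directional_derivative_negative_general f g hfC1 hgconv x d F' hF' hneg
end
end

section
/- Suppose each f_j is strictly convex and for each x ∈ ℝⁿ the function d ↦ Q(x,d) has a unique global minimizer d(x). If x is a critical point of the multi-objective problem min (F_1,…,F_m), then d(x) = 0. -/
open Filter Topology Finset
open scoped RealInnerProductSpace

noncomputable section

/-- if each `f_j` is strictly convex (with positive definite Hessian), `d(x)`
is the unique global minimizer of `d ↦ Q(x,d)`, and `x` is a critical point of
`min (F_1,…,F_m)` with `F_j = f_j + g_j`, then `d(x) = 0`. -/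
theorem critical_imp_minimizer_zero {n m : ℕ}
    (f g : Fin (m + 1) → EuclideanSpace ℝ (Fin n) → ℝ)
    (hfstrict : ∀ j, StrictConvexOn ℝ Set.univ (f j))
    (hfC2 : ∀ j, ContDiff ℝ 2 (f j))
    (hfposdef : ∀ j (y d : EuclideanSpace ℝ (Fin n)), d ≠ 0 →
      0 < ⟪(fderiv ℝ (gradient (f j)) y) d, d⟫)
    (hgconv : ∀ j, ConvexOn ℝ Set.univ (g j))
    (hgcont : ∀ j, Continuous (g j))
    (x dx : EuclideanSpace ℝ (Fin n))
    (hmin : ∀ d, Qmax f g x dx ≤ Qmax f g x d)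
    (huniq : ∀ d, (∀ d', Qmax f g x d ≤ Qmax f g x d') → d = dx)
    (F' : Fin (m + 1) → EuclideanSpace ℝ (Fin n) → ℝ)
    (hF' : ∀ j d, HasDirDeriv (fun y => f j y + g j y) x d (F' j d))
    (hcrit : ∀ d : EuclideanSpace ℝ (Fin n),
      0 ≤ Finset.univ.sup' Finset.univ_nonempty (fun j => F' j d)) :
    dx = 0 := by
  -- Key estimate: the directional derivative is bounded by Q_j.
  have key : ∀ (j : Fin (m + 1)) (d : EuclideanSpace ℝ (Fin n)),
      F' j d ≤ Qj f g j x d := by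
    intro j d
    set L := fderiv ℝ (f j) x with hL
    -- f j is differentiable
    have hdf : DifferentiableAt ℝ (f j) x :=
      ((hfC2 j).differentiable (by norm_num)).differentiableAt
    -- the curve α ↦ x + α • d has derivative d at 0
    have hφ : HasDerivAt (fun α : ℝ => x + α • d) d 0 := by
      have h1 : HasDerivAt (fun α : ℝ => α • d) ((1 : ℝ) • d) 0 :=
        (hasDerivAt_id (0 : ℝ)).smul_const d
      simpa using h1.const_add x
    -- difference quotients of f j tend to L d
    have hcomp : HasDerivAt (fun α : ℝ => f j (x + α • d)) (L d) 0 := by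
      have hdf' : HasFDerivAt (f j) L (x + (0 : ℝ) • d) := by
        simpa using hdf.hasFDerivAt
      exact hdf'.comp_hasDerivAt 0 hφ
    have hfquot : Tendsto (fun α : ℝ => (f j (x + α • d) - f j x) / α)
        (nhdsWithin 0 (Set.Ioi 0)) (nhds (L d)) := by
      have hslope := hasDerivAt_iff_tendsto_slope.mp hcomp
      have hmono : nhdsWithin (0 : ℝ) (Set.Ioi 0) ≤ nhdsWithin 0 {(0 : ℝ)}ᶜ :=
        nhdsWithin_mono 0 (fun a ha => ne_of_gt ha)
      have := hslope.mono_left hmono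
      refine this.congr' ?_
      filter_upwards [self_mem_nhdsWithin] with α (hα : (0 : ℝ) < α)
      simp [slope_def_field]
    -- difference quotients of g j are eventually bounded by g j (x+d) - g j x,
    -- and (full quotient - f quotient) tends to F' j d - L d
    have hgquot : Tendsto (fun α : ℝ =>
        ((f j (x + α • d) + g j (x + α • d) - (f j x + g j x)) / α
          - (f j (x + α • d) - f j x) / α))
        (nhdsWithin 0 (Set.Ioi 0)) (nhds (F' j d - L d)) :=
      (hF' j d).sub hfquot
    have hle : F' j d - L d ≤ g j (x + d) - g j x := by
      refine le_of_tendsto hgquot ?_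
      have h1 : ∀ᶠ α : ℝ in nhdsWithin 0 (Set.Ioi 0), α < 1 :=
        (eventually_lt_nhds one_pos).filter_mono nhdsWithin_le_nhds
      filter_upwards [self_mem_nhdsWithin, h1] with α (hα : (0 : ℝ) < α) hα1
      have hcvx := (hgconv j).2 (Set.mem_univ x) (Set.mem_univ (x + d))
        (by linarith : (0 : ℝ) ≤ 1 - α) (le_of_lt hα) (by ring)
      have hpt : (1 - α) • x + α • (x + d) = x + α • d := by
        module
      rw [hpt] at hcvx
      rw [smul_eq_mul, smul_eq_mul] at hcvx
      have hquot : (g j (x + α • d) - g j x) / α ≤ g j (x + d) - g j x := by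
        rw [div_le_iff₀ hα]
        nlinarith [hcvx]
      have : (f j (x + α • d) + g j (x + α • d) - (f j x + g j x)) / α
          - (f j (x + α • d) - f j x) / α = (g j (x + α • d) - g j x) / α := by
        field_simp
        ring
      rw [this]
      exact hquot
    -- ⟪gradient (f j) x, d⟫ = L d
    have hgrad : ⟪gradient (f j) x, d⟫ = L d := by
      simp [gradient, InnerProductSpace.toDual_symm_apply, hL]
    -- Hessian term nonnegative
    have hhess : 0 ≤ ⟪(fderiv ℝ (gradient (f j)) x) d, d⟫ := by
      rcases eq_or_ne d 0 with rfl | hd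
      · simp
      · exact le_of_lt (hfposdef j x d hd)
    have : F' j d ≤ L d + (g j (x + d) - g j x) := by linarith
    unfold Qj
    rw [hgrad]
    linarith
  -- Qmax f g x 0 = 0
  have hQj0 : ∀ j : Fin (m + 1), Qj f g j x (0 : EuclideanSpace ℝ (Fin n)) = 0 := by
    intro j; simp [Qj]
  have hQ0 : Qmax f g x 0 = 0 := by
    unfold Qmax
    rw [show (fun j => Qj f g j x (0 : EuclideanSpace ℝ (Fin n))) = fun _ => (0 : ℝ)
      from funext hQj0]
    exact Finset.sup'_const _ 0
  -- 0 is a global minimizer of Qmax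
  have hzero_min : ∀ d', Qmax f g x 0 ≤ Qmax f g x d' := by
    intro d'
    rw [hQ0]
    by_contra h
    push_neg at h
    obtain ⟨j0, _, hj0⟩ := Finset.exists_mem_eq_sup' Finset.univ_nonempty
      (fun j => F' j d')
    have h1 : F' j0 d' ≤ Qj f g j0 x d' := key j0 d'
    have h2 : Qj f g j0 x d' ≤ Qmax f g x d' := by
      unfold Qmax
      exact Finset.le_sup' (fun j => Qj f g j x d') (Finset.mem_univ j0)
    have h3 := hcrit d'
    rw [hj0] at h3
    linarith
  exact (huniq 0 hzero_min).symm
end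
end

section
/- Suppose each f_j is strictly convex and d = 0 is a global minimizer of the function d ↦ Q(x,d) for some x ∈ ℝⁿ. Then x is a critical point of the multi-objective problem min (F_1,…,F_m). -/
open Filter Topology Finset
open scoped RealInnerProductSpace

noncomputable section

/-- if each `f_j` is strictly convex and `d = 0` is a global minimizer of
`d ↦ Q(x,d)`, then `x` is a critical point of `min (F_1,…,F_m)` with `F_j = f_j + g_j`. -/
theorem minimizer_zero_imp_critical {n m : ℕ}
    (f g : Fin (m + 1) → EuclideanSpace ℝ (Fin n) → ℝ)
    (hfstrict : ∀ j, StrictConvexOn ℝ Set.univ (f j))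
    (hfC2 : ∀ j, ContDiff ℝ 2 (f j))
    (hgconv : ∀ j, ConvexOn ℝ Set.univ (g j))
    (hgcont : ∀ j, Continuous (g j))
    (x : EuclideanSpace ℝ (Fin n))
    (hmin : ∀ d, Qmax f g x 0 ≤ Qmax f g x d)
    (F' : Fin (m + 1) → EuclideanSpace ℝ (Fin n) → ℝ)
    (hF' : ∀ j d, HasDirDeriv (fun y => f j y + g j y) x d (F' j d)) :
    ∀ d : EuclideanSpace ℝ (Fin n),
      0 ≤ Finset.univ.sup' Finset.univ_nonempty (fun j => F' j d) := by
  intro d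
  -- Q(x,0) = 0
  have hQ0 : Qmax f g x 0 = 0 := by
    have : ∀ j : Fin (m + 1), Qj f g j x 0 = 0 := by
      intro j
      simp [Qj]
    simp only [Qmax]
    rw [show (fun j => Qj f g j x 0) = fun _ => (0 : ℝ) from funext this]
    simp
  -- each f j is differentiable at x
  have hdiff : ∀ j, DifferentiableAt ℝ (f j) x := fun j =>
    ((hfC2 j).differentiable (by norm_num)).differentiableAt
  -- the quotient Qj(x, α•d)/α tends to F' j d as α → 0⁺
  have hQtendsto : ∀ j, Tendsto (fun α : ℝ => Qj f g j x (α • d) / α)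
      (𝓝[>] (0:ℝ)) (𝓝 (F' j d)) := by
    intro j
    -- directional derivative of f j
    have hgrad : HasGradientAt (f j) (gradient (f j) x) x := (hdiff j).hasGradientAt
    have hline : HasLineDerivAt ℝ (f j) (⟪gradient (f j) x, d⟫) x d := by
      have := hgrad.hasFDerivAt.hasLineDerivAt d
      simpa using this
    have hfslope : Tendsto (fun α : ℝ => (f j (x + α • d) - f j x) / α)
        (𝓝[>] (0:ℝ)) (𝓝 (⟪gradient (f j) x, d⟫)) := by
      have := hline.tendsto_slope_zero_right
      simpa [smul_eq_mul, div_eq_inv_mul] using this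
    have hFslope := hF' j d
    -- limit of the candidate decomposition
    have hcomb : Tendsto (fun α : ℝ =>
        ⟪gradient (f j) x, d⟫ + α / 2 * ⟪(fderiv ℝ (gradient (f j)) x) d, d⟫
          + (((f j (x + α • d) + g j (x + α • d)) - (f j x + g j x)) / α
            - (f j (x + α • d) - f j x) / α))
        (𝓝[>] (0:ℝ)) (𝓝 (F' j d)) := by
      have h1 : Tendsto (fun α : ℝ => α / 2 * ⟪(fderiv ℝ (gradient (f j)) x) d, d⟫)
          (𝓝[>] (0:ℝ)) (𝓝 0) := by
        have : Tendsto (fun α : ℝ => α / 2 * ⟪(fderiv ℝ (gradient (f j)) x) d, d⟫)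
            (𝓝 (0:ℝ)) (𝓝 (0 / 2 * ⟪(fderiv ℝ (gradient (f j)) x) d, d⟫)) :=
          ((continuous_id.div_const 2).mul continuous_const).tendsto 0
        simpa using this.mono_left nhdsWithin_le_nhds
      have h2 := (hFslope.sub hfslope)
      have hc : Tendsto (fun _ : ℝ => (⟪gradient (f j) x, d⟫ : ℝ)) (𝓝[>] (0:ℝ))
          (𝓝 (⟪gradient (f j) x, d⟫)) := tendsto_const_nhds
      have := (hc.add h1).add h2
      have heq : ⟪gradient (f j) x, d⟫ + 0 + (F' j d - ⟪gradient (f j) x, d⟫) = F' j d := by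
        ring
      rw [heq] at this
      exact this
    refine hcomb.congr' ?_
    filter_upwards [self_mem_nhdsWithin] with α (hα : (0:ℝ) < α)
    have hα' : α ≠ 0 := ne_of_gt hα
    simp only [Qj, inner_smul_right, map_smul, inner_smul_left, RCLike.conj_to_real]
    field_simp
    ring
  -- suppose the sup of directional derivatives is negative
  by_contra hneg
  push_neg at hneg
  have hall : ∀ j : Fin (m + 1), F' j d < 0 := by
    intro j
    exact lt_of_le_of_lt (Finset.le_sup' (fun j => F' j d) (Finset.mem_univ j)) hneg
  -- eventually every quotient is negative
  have hev : ∀ᶠ α in 𝓝[>] (0:ℝ), ∀ j : Fin (m + 1), Qj f g j x (α • d) / α < 0 := by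
    rw [Filter.eventually_all]
    intro j
    exact (hQtendsto j).eventually (Iio_mem_nhds (hall j))
  -- but Qmax f g x (α • d) ≥ 0, contradiction
  have hfalse : ∀ᶠ α in 𝓝[>] (0:ℝ), False := by
    filter_upwards [hev, self_mem_nhdsWithin] with α hα (hαpos : (0:ℝ) < α)
    have h1 : (0:ℝ) ≤ Qmax f g x (α • d) := hQ0 ▸ hmin (α • d)
    have h2 : Qmax f g x (α • d) < 0 := by
      rw [Qmax, Finset.sup'_lt_iff]
      intro j _
      have := hα j
      have := (div_neg_iff).mp this
      rcases this with ⟨h, h'⟩ | ⟨h, h'⟩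
      · linarith
      · exact h
    linarith
  exact (nhdsGT_neBot (0:ℝ)).ne (Filter.eventually_false_iff_eq_bot.mp hfalse)
end
end

section
/- Suppose each f_j is strictly convex, so that t(x) = 0 if and only if d(x) = 0. Then t(x) < 0 holds if and only if x is not a critical point of the multi-objective problem min (F_1,…,F_m). -/
/-!
Along a ray, `Q_j(x, α d) / α → F_j'(x; d)` as `α → 0⁺`, because the quadratic term is `O(α²)`
and the remaining terms are the difference quotients of `F_j`. So if some `d` has
`F_j'(x; d) < 0` for all `j`, then `Q(x, α d) < 0` for small `α > 0` and `t(x) < 0`.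
Conversely, convexity of `g_j` and `∇²f_j(x) ⪰ 0` give `F_j'(x; d) ≤ Q_j(x, d)`, so
`max_j F_j'(x; d(x)) ≤ t(x)`, and `t(x) < 0` exhibits a descent direction.
-/

open Filter Topology Finset
open scoped RealInnerProductSpace

noncomputable section

namespace HasDirDeriv

variable {n : ℕ} {F G : EuclideanSpace ℝ (Fin n) → ℝ} {x d : EuclideanSpace ℝ (Fin n)} {a c : ℝ}

theorem of_add_left (hFG : HasDirDeriv (fun y => F y + G y) x d c) (hF : HasDirDeriv F x d a) :
    HasDirDeriv G x d (c - a) := by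
  unfold HasDirDeriv at *
  convert hFG.sub hF using 2 with α
  ring

theorem eventually_lt (hF : HasDirDeriv F x d c) (hc : c < 0) :
    ∀ᶠ α in 𝓝[>] (0 : ℝ), F (x + α • d) < F x := by
  filter_upwards [hF.eventually (eventually_lt_nhds hc), self_mem_nhdsWithin]
    with α hquot (hα : 0 < α)
  linarith [(div_lt_iff₀ hα).1 hquot]

end HasDirDeriv

section Calculus

variable {n : ℕ} {F G : EuclideanSpace ℝ (Fin n) → ℝ} {x d : EuclideanSpace ℝ (Fin n)} {c : ℝ}

theorem HasGradientAt.hasDirDeriv {F' : EuclideanSpace ℝ (Fin n)} (hF : HasGradientAt F F' x)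
    (d : EuclideanSpace ℝ (Fin n)) : HasDirDeriv F x d ⟪F', d⟫ := by
  have := (hF.hasFDerivAt.hasLineDerivAt d).tendsto_slope_zero_right
  simp only [smul_eq_mul, InnerProductSpace.toDual_apply_apply] at this
  unfold HasDirDeriv
  convert this using 2 with α
  rw [inv_mul_eq_div]

/-- Along the chord to `x + d`, the difference quotients of a convex function increase. -/
theorem ConvexOn.hasDirDeriv_le (hG : ConvexOn ℝ Set.univ G) (h : HasDirDeriv G x d c) :
    c ≤ G (x + d) - G x := by
  refine le_of_tendsto h ?_
  filter_upwards [Ioc_mem_nhdsGT zero_lt_one] with α ⟨hα0, hα1⟩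
  rw [div_le_iff₀ hα0]
  have hchord := hG.2 (Set.mem_univ x) (Set.mem_univ (x + d)) (sub_nonneg.2 hα1) hα0.le
    (sub_add_cancel 1 α)
  rw [show (1 - α) • x + α • (x + d) = x + α • d by module, smul_eq_mul, smul_eq_mul] at hchord
  linarith

end Calculus

section Model

variable {n m : ℕ} {f g : Fin (m + 1) → EuclideanSpace ℝ (Fin n) → ℝ} {j : Fin (m + 1)}
  {x d : EuclideanSpace ℝ (Fin n)} {c : ℝ}

theorem Qj_smul (α : ℝ) :
    Qj f g j x (α • d) = α * ⟪gradient (f j) x, d⟫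
      + α ^ 2 / 2 * ⟪(fderiv ℝ (gradient (f j)) x) d, d⟫ + g j (x + α • d) - g j x := by
  simp only [Qj, map_smul, real_inner_smul_right, real_inner_smul_left]
  ring

theorem Qj_le_Qmax : Qj f g j x d ≤ Qmax f g x d :=
  Finset.le_sup' (fun j => Qj f g j x d) (Finset.mem_univ j)

theorem hasDirDeriv_Qj_zero (hf : DifferentiableAt ℝ (f j) x)
    (hF : HasDirDeriv (fun y => f j y + g j y) x d c) : HasDirDeriv (Qj f g j x) 0 d c := by
  set L := ⟪gradient (f j) x, d⟫
  set H := ⟪(fderiv ℝ (gradient (f j)) x) d, d⟫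
  have hg : HasDirDeriv (g j) x d (c - L) := hF.of_add_left (hf.hasGradientAt.hasDirDeriv d)
  have hquad : Tendsto (fun α : ℝ => α / 2 * H) (𝓝[>] 0) (𝓝 0) := by
    simpa using ((continuous_id.div_const 2).mul_const H).continuousWithinAt.tendsto
      (x := (0 : ℝ)) (s := Set.Ioi 0)
  have hsum := (tendsto_const_nhds (x := L)).add (hquad.add hg)
  rw [zero_add, add_sub_cancel] at hsum
  refine hsum.congr' ?_
  filter_upwards [self_mem_nhdsWithin] with α (hα : 0 < α)
  rw [zero_add, Qj_smul, show Qj f g j x 0 = 0 by simp [Qj]]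
  field_simp
  ring

theorem hasDirDeriv_le_Qj (hf : DifferentiableAt ℝ (f j) x)
    (hH : 0 ≤ ⟪(fderiv ℝ (gradient (f j)) x) d, d⟫) (hg : ConvexOn ℝ Set.univ (g j))
    (hF : HasDirDeriv (fun y => f j y + g j y) x d c) : c ≤ Qj f g j x d := by
  have := hg.hasDirDeriv_le (hF.of_add_left (hf.hasGradientAt.hasDirDeriv d))
  rw [Qj]
  linarith

theorem exists_Qmax_neg {c : Fin (m + 1) → ℝ} (hQ : ∀ j, HasDirDeriv (Qj f g j x) 0 d (c j))
    (hc : ∀ j, c j < 0) : ∃ d', Qmax f g x d' < 0 := by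
  have hdesc := eventually_all.2 fun j => (hQ j).eventually_lt (hc j)
  obtain ⟨α, hα⟩ := hdesc.exists
  refine ⟨α • d, (Finset.sup'_lt_iff _).2 fun j _ => ?_⟩
  simpa [Qj] using hα j

end Model

theorem t_neg_iff_noncritical_general {n m : ℕ}
    (f g : Fin (m + 1) → EuclideanSpace ℝ (Fin n) → ℝ)
    (hfC2 : ∀ j, ContDiff ℝ 2 (f j))
    (hfposdef : ∀ j (y d : EuclideanSpace ℝ (Fin n)), d ≠ 0 →
      0 < ⟪(fderiv ℝ (gradient (f j)) y) d, d⟫)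
    (hgconv : ∀ j, ConvexOn ℝ Set.univ (g j))
    (x dx : EuclideanSpace ℝ (Fin n)) (t : ℝ)
    (hmin : ∀ d, Qmax f g x dx ≤ Qmax f g x d)
    (ht : t = Qmax f g x dx)
    (F' : Fin (m + 1) → EuclideanSpace ℝ (Fin n) → ℝ)
    (hF' : ∀ j d, HasDirDeriv (fun y => f j y + g j y) x d (F' j d)) :
    t < 0 ↔
      ¬ (∀ d : EuclideanSpace ℝ (Fin n),
          0 ≤ Finset.univ.sup' Finset.univ_nonempty (fun j => F' j d)) := by
  have hdiff : ∀ j, DifferentiableAt ℝ (f j) x :=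
    fun j => (hfC2 j).differentiable two_ne_zero x
  have hcurv : ∀ j d, 0 ≤ ⟪(fderiv ℝ (gradient (f j)) x) d, d⟫ := by
    intro j d
    rcases eq_or_ne d 0 with rfl | hd
    · simp
    · exact (hfposdef j x d hd).le
  subst ht
  constructor
  · intro hneg hcrit
    obtain ⟨j, -, hj⟩ := (Finset.le_sup'_iff _).1 (hcrit dx)
    have := hasDirDeriv_le_Qj (hdiff j) (hcurv j dx) (hgconv j) (hF' j dx)
    linarith [Qj_le_Qmax (f := f) (g := g) (j := j) (x := x) (d := dx)]
  · intro hnoncrit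
    simp only [not_forall, not_le] at hnoncrit
    obtain ⟨d, hd⟩ := hnoncrit
    obtain ⟨d', hd'⟩ := exists_Qmax_neg (fun j => hasDirDeriv_Qj_zero (hdiff j) (hF' j d))
      fun j => (Finset.sup'_lt_iff _).1 hd j (Finset.mem_univ j)
    exact (hmin d').trans_lt hd'

/-- with each `f_j` strictly convex (positive definite Hessian), `d(x)` the
unique global minimizer of `d ↦ Q(x,d)` and `t(x) = Q(x,d(x))`: `t(x) < 0` if and only if
`x` is not a critical point of `min (F_1,…,F_m)` with `F_j = f_j + g_j`. -/
theorem t_neg_iff_noncritical {n m : ℕ}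
    (f g : Fin (m + 1) → EuclideanSpace ℝ (Fin n) → ℝ)
    (hfstrict : ∀ j, StrictConvexOn ℝ Set.univ (f j))
    (hfC2 : ∀ j, ContDiff ℝ 2 (f j))
    (hfposdef : ∀ j (y d : EuclideanSpace ℝ (Fin n)), d ≠ 0 →
      0 < ⟪(fderiv ℝ (gradient (f j)) y) d, d⟫)
    (hgconv : ∀ j, ConvexOn ℝ Set.univ (g j))
    (hgcont : ∀ j, Continuous (g j))
    (x dx : EuclideanSpace ℝ (Fin n)) (t : ℝ)
    (hmin : ∀ d, Qmax f g x dx ≤ Qmax f g x d)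
    (huniq : ∀ d, (∀ d', Qmax f g x d ≤ Qmax f g x d') → d = dx)
    (ht : t = Qmax f g x dx)
    (F' : Fin (m + 1) → EuclideanSpace ℝ (Fin n) → ℝ)
    (hF' : ∀ j d, HasDirDeriv (fun y => f j y + g j y) x d (F' j d)) :
    t < 0 ↔
      ¬ (∀ d : EuclideanSpace ℝ (Fin n),
          0 ≤ Finset.univ.sup' Finset.univ_nonempty (fun j => F' j d)) :=
  t_neg_iff_noncritical_general f g hfC2 hfposdef hgconv x dx t hmin ht F' hF'
end
end

section
/- Suppose each f_j is σ-strongly convex (σ > 0) and twice continuously differentiable, and let d(x^k) denote the unique global minimizer of d ↦ Q(x^k,d). If the sequence {x^k} ⊂ ℝⁿ converges to x* and the sequence {d(x^k)} converges to d*, then d* = d(x*), the unique global minimizer of d ↦ Q(x*,d). -/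
open Filter Topology Finset
open scoped RealInnerProductSpace

noncomputable section

/-- `σ`-strong convexity: `f(αx+(1−α)y) ≤ αf(x)+(1−α)f(y) − (σ/2)α(1−α)‖x−y‖²`. -/
def StronglyConvexFun {n : ℕ} (σ : ℝ) (f : EuclideanSpace ℝ (Fin n) → ℝ) : Prop :=
  ∀ x y : EuclideanSpace ℝ (Fin n), ∀ α : ℝ, 0 ≤ α → α ≤ 1 →
    f (α • x + (1 - α) • y) ≤ α * f x + (1 - α) * f y - σ / 2 * α * (1 - α) * ‖x - y‖ ^ 2

/-!
Each `Q_j` is jointly continuous in `(x, d)`: the gradient and Hessian of a `C²` function are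
continuous and `g_j` is continuous. Hence so is their maximum `Q`, and letting `k → ∞` in
`Q(x^k, d(x^k)) ≤ Q(x^k, d')` shows that `d*` minimizes `Q(x*, ·)`; by uniqueness `d* = d(x*)`.
-/

theorem ContDiff.contDiff_gradient {E : Type*} [NormedAddCommGroup E] [InnerProductSpace ℝ E]
    [CompleteSpace E] {f : E → ℝ} (hf : ContDiff ℝ 2 f) : ContDiff ℝ 1 (gradient f) :=
  (InnerProductSpace.toDual ℝ E).symm.contDiff.comp (hf.fderiv_right (by norm_num))

theorem Continuous.le_of_tendsto_minimizer {X D α : Type*} [TopologicalSpace X]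
    [TopologicalSpace D] [LinearOrder α] [TopologicalSpace α] [OrderClosedTopology α]
    {Φ : X → D → α} (hΦ : Continuous (Function.uncurry Φ)) {dmap : X → D}
    (hmin : ∀ y d, Φ y (dmap y) ≤ Φ y d) {ι : Type*} {l : Filter ι} [l.NeBot]
    {xseq : ι → X} {xstar : X} {dstar : D} (hx : Tendsto xseq l (𝓝 xstar))
    (hd : Tendsto (fun k => dmap (xseq k)) l (𝓝 dstar)) (d : D) :
    Φ xstar dstar ≤ Φ xstar d :=
  le_of_tendsto_of_tendsto' ((hΦ.tendsto _).comp (hx.prodMk_nhds hd))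
    ((hΦ.tendsto _).comp (hx.prodMk_nhds tendsto_const_nhds)) fun k => hmin (xseq k) d

section

variable {n m : ℕ} {f g : Fin (m + 1) → EuclideanSpace ℝ (Fin n) → ℝ}

theorem continuous_uncurry_Qj {j : Fin (m + 1)} (hf : ContDiff ℝ 2 (f j))
    (hg : Continuous (g j)) : Continuous (Function.uncurry (Qj f g j)) := by
  have hgrad := hf.contDiff_gradient
  unfold Function.uncurry Qj
  fun_prop

theorem continuous_uncurry_Qmax (hf : ∀ j, ContDiff ℝ 2 (f j)) (hg : ∀ j, Continuous (g j)) :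
    Continuous (Function.uncurry (Qmax f g)) :=
  Continuous.finset_sup'_apply univ_nonempty fun j _ => continuous_uncurry_Qj (hf j) (hg j)

end

theorem limit_of_minimizers_general {n m : ℕ}
    (f g : Fin (m + 1) → EuclideanSpace ℝ (Fin n) → ℝ)
    (hfC2 : ∀ j, ContDiff ℝ 2 (f j))
    (hgcont : ∀ j, Continuous (g j))
    (dmap : EuclideanSpace ℝ (Fin n) → EuclideanSpace ℝ (Fin n))
    (hdmin : ∀ y d, Qmax f g y (dmap y) ≤ Qmax f g y d)
    (hduniq : ∀ y d, (∀ d', Qmax f g y d ≤ Qmax f g y d') → d = dmap y)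
    (xseq : ℕ → EuclideanSpace ℝ (Fin n)) (xstar dstar : EuclideanSpace ℝ (Fin n))
    (hx : Tendsto xseq atTop (nhds xstar))
    (hd : Tendsto (fun k => dmap (xseq k)) atTop (nhds dstar)) :
    dstar = dmap xstar :=
  hduniq xstar dstar <|
    (continuous_uncurry_Qmax hfC2 hgcont).le_of_tendsto_minimizer hdmin hx hd

/-- if each `f_j` is `σ`-strongly convex and twice continuously
differentiable, `d(·)` maps each point to the unique global minimizer of `d ↦ Q(·,d)`,
`x^k → x*` and `d(x^k) → d*`, then `d* = d(x*)`. -/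
theorem limit_of_minimizers {n m : ℕ} (σ : ℝ) (hσ : 0 < σ)
    (f g : Fin (m + 1) → EuclideanSpace ℝ (Fin n) → ℝ)
    (hfsc : ∀ j, StronglyConvexFun σ (f j))
    (hfC2 : ∀ j, ContDiff ℝ 2 (f j))
    (hgconv : ∀ j, ConvexOn ℝ Set.univ (g j))
    (hgcont : ∀ j, Continuous (g j))
    (dmap : EuclideanSpace ℝ (Fin n) → EuclideanSpace ℝ (Fin n))
    (hdmin : ∀ y d, Qmax f g y (dmap y) ≤ Qmax f g y d)
    (hduniq : ∀ y d, (∀ d', Qmax f g y d ≤ Qmax f g y d') → d = dmap y)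
    (xseq : ℕ → EuclideanSpace ℝ (Fin n)) (xstar dstar : EuclideanSpace ℝ (Fin n))
    (hx : Tendsto xseq atTop (nhds xstar))
    (hd : Tendsto (fun k => dmap (xseq k)) atTop (nhds dstar)) :
    dstar = dmap xstar :=
  limit_of_minimizers_general f g hfC2 hgcont dmap hdmin hduniq xseq xstar dstar hx hd
end
end

section
/- Suppose each f_j is σ-strongly convex (σ > 0), d(x) is the unique global minimizer of d ↦ Q(x,d), and t(x) = Q(x,d(x)). Then t(x) ≤ −(σ/2)‖d(x)‖². -/
/-!
Compare `d = d(x)` with the shorter step `s • d`, `0 < s < 1`. Along the ray `s ↦ s • d` the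
linear part of `Q_j` scales by `s`, the quadratic part by `s²`, and the `g_j` part is at most `s`
times its value at `d` by convexity; since `⟪∇²f_j(x) d, d⟫ ≥ σ‖d‖²`, this gives
`Q(x, s • d) ≤ s Q(x, d) - (σ/2) s (1 - s) ‖d‖²`. Minimality of `d` turns this into
`t ≤ -(σ/2) s ‖d‖²`, and `s → 1` concludes. The Hessian bound holds because
`f_j - (σ/2)‖·‖²` is convex, so its second derivative along any line is nonnegative.
-/

open Filter Topology Finset
open scoped RealInnerProductSpace

noncomputable section

lemma StronglyConvexFun.strongConvexOn {n : ℕ} {σ : ℝ} {f : EuclideanSpace ℝ (Fin n) → ℝ}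
    (hf : StronglyConvexFun σ f) : StrongConvexOn Set.univ σ f := by
  refine ⟨convex_univ, fun x _ y _ a b ha hb hab => ?_⟩
  obtain rfl : b = 1 - a := by linarith
  convert hf x y a ha (by linarith) using 1
  simp only [smul_eq_mul]
  ring

lemma ConvexOn.nonneg_of_hasDerivAt2 {φ φ' : ℝ → ℝ} {c s : ℝ}
    (hφ : ConvexOn ℝ Set.univ φ) (hφ' : ∀ t, HasDerivAt φ (φ' t) t) (hc : HasDerivAt φ' c s) :
    0 ≤ c := by
  have hderiv : deriv φ = φ' := funext fun t => (hφ' t).deriv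
  have hmono := hφ.monotoneOn_deriv fun t _ => (hφ' t).differentiableAt
  rw [hderiv, monotoneOn_univ] at hmono
  exact hc.nonneg_of_monotone hmono

section InnerProductSpace

variable {E : Type*} [NormedAddCommGroup E] [InnerProductSpace ℝ E]

lemma hasDerivAt_add_smul (x d : E) (t : ℝ) : HasDerivAt (fun s : ℝ => x + s • d) d t := by
  simpa using ((hasDerivAt_id t).smul_const d).const_add x

lemma HasFDerivAt.hasDerivAt_add_smul {F : Type*} [NormedAddCommGroup F] [NormedSpace ℝ F]
    {G : E → F} {G' : E →L[ℝ] F} {x d : E} {t : ℝ} (hG : HasFDerivAt G G' (x + t • d)) :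
    HasDerivAt (fun s : ℝ => G (x + s • d)) (G' d) t :=
  hG.comp_hasDerivAt t (_root_.hasDerivAt_add_smul x d t)

variable [CompleteSpace E]

lemma StrongConvexOn.mul_norm_sq_le_inner_fderiv_gradient {σ : ℝ} {f : E → ℝ}
    (hsc : StrongConvexOn Set.univ σ f) (hf : ContDiff ℝ 2 f) (x d : E) :
    σ * ‖d‖ ^ 2 ≤ ⟪fderiv ℝ (gradient f) x d, d⟫ := by
  have hgrad : ContDiff ℝ 1 (gradient f) :=
    (InnerProductSpace.toDual ℝ E).symm.contDiff.comp (hf.fderiv_right le_rfl)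
  have hconv : ConvexOn ℝ Set.univ fun s : ℝ => f (x + s • d) - σ / 2 * ‖x + s • d‖ ^ 2 := by
    have h := ((strongConvexOn_iff_convex.1 hsc).translate_right x).comp_linearMap
      ((LinearMap.id : ℝ →ₗ[ℝ] ℝ).smulRight d)
    simp only [Set.preimage_univ] at h
    exact h
  have hφ' : ∀ t : ℝ, HasDerivAt (fun s : ℝ => f (x + s • d) - σ / 2 * ‖x + s • d‖ ^ 2)
      (⟪gradient f (x + t • d), d⟫ - σ * ⟪x + t • d, d⟫) t := by
    intro t
    have hfd := ((hf.differentiable (by norm_num)) (x + t • d)).hasGradientAt.hasFDerivAt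
    refine (hfd.hasDerivAt_add_smul.sub
      ((hasDerivAt_add_smul x d t).norm_sq.const_mul (σ / 2))).congr_deriv ?_
    simp only [InnerProductSpace.toDual_apply_apply]
    ring
  have hc : HasDerivAt (fun t : ℝ => ⟪gradient f (x + t • d), d⟫ - σ * ⟪x + t • d, d⟫)
      (⟪fderiv ℝ (gradient f) x d, d⟫ - σ * ‖d‖ ^ 2) 0 := by
    have hgd := ((hgrad.differentiable one_ne_zero) (x + (0 : ℝ) • d)).hasFDerivAt
    refine ((hgd.hasDerivAt_add_smul.inner ℝ (hasDerivAt_const 0 d)).sub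
      (((hasDerivAt_add_smul x d 0).inner ℝ (hasDerivAt_const 0 d)).const_mul σ)).congr_deriv ?_
    simp
  linarith [hconv.nonneg_of_hasDerivAt2 hφ' hc]

end InnerProductSpace

section Subproblem

variable {n m : ℕ} {σ : ℝ} {f g : Fin (m + 1) → EuclideanSpace ℝ (Fin n) → ℝ}
  {x d : EuclideanSpace ℝ (Fin n)} {s : ℝ}

lemma Qj_smul_le {j : Fin (m + 1)} (hH : σ * ‖d‖ ^ 2 ≤ ⟪fderiv ℝ (gradient (f j)) x d, d⟫)
    (hg : ConvexOn ℝ Set.univ (g j)) (hs₀ : 0 ≤ s) (hs₁ : s ≤ 1) :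
    Qj f g j x (s • d) ≤ s * Qj f g j x d - σ / 2 * s * (1 - s) * ‖d‖ ^ 2 := by
  have hgs : g j (x + s • d) ≤ (1 - s) * g j x + s * g j (x + d) := by
    have h := hg.2 (Set.mem_univ x) (Set.mem_univ (x + d)) (sub_nonneg.2 hs₁) hs₀ (by ring)
    rwa [show (1 - s) • x + s • (x + d) = x + s • d by module, smul_eq_mul, smul_eq_mul] at h
  have hquad := mul_le_mul_of_nonneg_left hH (mul_nonneg hs₀ (sub_nonneg.2 hs₁))
  unfold Qj
  rw [map_smul, real_inner_smul_right, real_inner_smul_left, real_inner_smul_right]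
  linear_combination hgs + hquad / 2

lemma Qmax_smul_le (hH : ∀ j, σ * ‖d‖ ^ 2 ≤ ⟪fderiv ℝ (gradient (f j)) x d, d⟫)
    (hg : ∀ j, ConvexOn ℝ Set.univ (g j)) (hs₀ : 0 ≤ s) (hs₁ : s ≤ 1) :
    Qmax f g x (s • d) ≤ s * Qmax f g x d - σ / 2 * s * (1 - s) * ‖d‖ ^ 2 := by
  refine Finset.sup'_le _ _ fun j _ => (Qj_smul_le (hH j) (hg j) hs₀ hs₁).trans ?_
  gcongr
  exact Finset.le_sup' (fun j => Qj f g j x d) (Finset.mem_univ j)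

end Subproblem

lemma le_of_forall_mem_Ioo_le_mul {a c : ℝ} (h : ∀ s ∈ Set.Ioo (0 : ℝ) 1, a ≤ s * c) : a ≤ c := by
  have hlim : Tendsto (fun s : ℝ => s * c) (𝓝[<] 1) (𝓝 c) := by
    simpa using ((continuous_mul_const c).tendsto 1).mono_left nhdsWithin_le_nhds
  exact ge_of_tendsto hlim (Filter.mem_of_superset (Ioo_mem_nhdsLT zero_lt_one) h)

theorem t_le_neg_sigma_half_norm_sq_general {n m : ℕ} (σ : ℝ)
    (f g : Fin (m + 1) → EuclideanSpace ℝ (Fin n) → ℝ)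
    (hfsc : ∀ j, StronglyConvexFun σ (f j))
    (hfC2 : ∀ j, ContDiff ℝ 2 (f j))
    (hgconv : ∀ j, ConvexOn ℝ Set.univ (g j))
    (x dx : EuclideanSpace ℝ (Fin n)) (t : ℝ)
    (hmin : ∀ d, Qmax f g x dx ≤ Qmax f g x d)
    (ht : t = Qmax f g x dx) :
    t ≤ -(σ / 2) * ‖dx‖ ^ 2 := by
  subst ht
  have hH := fun j => (hfsc j).strongConvexOn.mul_norm_sq_le_inner_fderiv_gradient (hfC2 j) x dx
  refine le_of_forall_mem_Ioo_le_mul fun s ⟨hs₀, hs₁⟩ => ?_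
  have hdescent := (hmin (s • dx)).trans (Qmax_smul_le hH hgconv hs₀.le hs₁.le)
  refine le_of_mul_le_mul_left ?_ (sub_pos.2 hs₁)
  linarith

/-- if each `f_j` is `σ`-strongly convex, `d(x)` is the unique global
minimizer of `d ↦ Q(x,d)` and `t(x) = Q(x,d(x))`, then `t(x) ≤ −(σ/2)‖d(x)‖²`. -/
theorem t_le_neg_sigma_half_norm_sq {n m : ℕ} (σ : ℝ) (hσ : 0 < σ)
    (f g : Fin (m + 1) → EuclideanSpace ℝ (Fin n) → ℝ)
    (hfsc : ∀ j, StronglyConvexFun σ (f j))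
    (hfC2 : ∀ j, ContDiff ℝ 2 (f j))
    (hgconv : ∀ j, ConvexOn ℝ Set.univ (g j))
    (hgcont : ∀ j, Continuous (g j))
    (x dx : EuclideanSpace ℝ (Fin n)) (t : ℝ)
    (hmin : ∀ d, Qmax f g x dx ≤ Qmax f g x d)
    (huniq : ∀ d, (∀ d', Qmax f g x d ≤ Qmax f g x d') → d = dx)
    (ht : t = Qmax f g x dx) :
    t ≤ -(σ / 2) * ‖dx‖ ^ 2 :=
  t_le_neg_sigma_half_norm_sq_general σ f g hfsc hfC2 hgconv x dx t hmin ht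
end
end
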